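/- For complex numbers x, y with |x| + |y| < 1 and any complex r, the double series ∑_{m,n ≥ 0} (r)_{m+n} / (m! n!) x^m y^n converges and equals (1 − x − y)^{−r} (principal branch). -/

import Mathlib

/-!
Grouping the terms along the antidiagonals `m + n = k`, the binomial theorem collapses the double
series to the one-variable binomial series `∑ (r)_k / k! (x + y)^k = (1 - x - y)^(-r)`. The same
computation with norms shows that the double series converges absolutely as soon as
`‖x‖ + ‖y‖ < 1` lies inside the unit radius of convergence, which justifies the regrouping.
-/

noncomputable def poch (a : ℂ) : ℕ → ℂ
  | 0 => 1
  | n + 1 => poch a n * (a + n)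

open Finset
open scoped Nat

theorem poch_eq_ascPochhammer_eval (a : ℂ) (n : ℕ) : poch a n = (ascPochhammer ℂ n).eval a := by
  induction n with
  | zero => simp [poch]
  | succ n ih => rw [poch, ih, ascPochhammer_succ_eval]

theorem ringChoose_add_sub_one_eq_poch_div_factorial (a : ℂ) (n : ℕ) :
    Ring.choose (a + n - 1) n = poch a n / n ! := by
  rw [Ring.choose_eq_smul, Polynomial.descPochhammer_smeval_eq_ascPochhammer,
    show a + n - 1 - n + 1 = a by ring, Polynomial.ascPochhammer_smeval_eq_eval,
    poch_eq_ascPochhammer_eval, smul_eq_mul, div_eq_inv_mul]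

theorem hasFPowerSeriesOnBall_one_sub_cpow_neg (r : ℂ) :
    HasFPowerSeriesOnBall (fun z : ℂ ↦ (1 - z) ^ (-r))
      (.ofScalars ℂ fun k ↦ poch r k / k !) 0 1 := by
  simpa [Complex.cpow_neg, ringChoose_add_sub_one_eq_poch_div_factorial] using
    Complex.one_div_one_sub_cpow_hasFPowerSeriesOnBall_zero r

theorem hasSum_poch_div_factorial_mul_pow (r : ℂ) {z : ℂ} (hz : ‖z‖ < 1) :
    HasSum (fun k ↦ poch r k / k ! * z ^ k) ((1 - z) ^ (-r)) := by
  have := (hasFPowerSeriesOnBall_one_sub_cpow_neg r).hasSum (y := z)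
    (by simpa [← ofReal_norm] using hz)
  simpa [FormalMultilinearSeries.ofScalars_apply_eq, mul_comm] using this

theorem summable_norm_poch_div_factorial_mul_pow (r : ℂ) {s : ℝ} (hs₀ : 0 ≤ s) (hs : s < 1) :
    Summable fun k ↦ ‖poch r k‖ / k ! * s ^ k := by
  have hrad := (hasFPowerSeriesOnBall_one_sub_cpow_neg r).r_le
  have := FormalMultilinearSeries.summable_norm_apply _ (x := (s : ℂ))
    (lt_of_lt_of_le (by simpa [← ofReal_norm, abs_of_nonneg hs₀] using hs) hrad)
  simpa [FormalMultilinearSeries.ofScalars_apply_eq, abs_of_nonneg hs₀, mul_comm] using this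

theorem sum_antidiagonal_div_factorial_mul_pow {K : Type*} [Field K] [CharZero K] (c u v : K)
    (k : ℕ) :
    ∑ p ∈ antidiagonal k, c / (p.1 ! * p.2 !) * u ^ p.1 * v ^ p.2 = c / k ! * (u + v) ^ k := by
  rw [(Commute.all u v).add_pow', mul_sum]
  refine sum_congr rfl fun p hp ↦ ?_
  rw [HasAntidiagonal.mem_antidiagonal] at hp
  subst hp
  have : ((p.1 + p.2)! : K) ≠ 0 := Nat.cast_ne_zero.2 (Nat.factorial_ne_zero _)
  rw [nsmul_eq_mul, Nat.cast_add_choose]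
  field_simp

theorem hasSum_of_summable_norm_sum_antidiagonal {A E : Type*} [AddCommMonoid A]
    [HasAntidiagonal A] [NormedAddCommGroup E] [CompleteSpace E] {f : A × A → E} {a : E}
    (hnorm : Summable fun k ↦ ∑ p ∈ antidiagonal k, ‖f p‖)
    (hsum : HasSum (fun k ↦ ∑ p ∈ antidiagonal k, f p) a) : HasSum f a := by
  let e := HasAntidiagonal.sigmaAntidiagonalEquivProd (A := A)
  have hsummable : Summable (f ∘ e) := by
    refine Summable.of_norm ((summable_sigma_of_nonneg fun _ ↦ norm_nonneg _).2
      ⟨fun k ↦ (hasSum_fintype _).summable, ?_⟩)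
    simpa [e, tsum_fintype, sum_attach (antidiagonal _) (fun p ↦ ‖f p‖)] using hnorm
  rw [← e.hasSum_iff]
  convert hsummable.hasSum
  refine hsum.unique (hsummable.hasSum.sigma fun k ↦ ?_)
  simpa [e, sum_attach (antidiagonal k) f] using hasSum_fintype fun p : antidiagonal k ↦ f p

theorem appell_F2_special (r x y : ℂ) (hxy : ‖x‖ + ‖y‖ < 1) :
    HasSum
      (fun mn : ℕ × ℕ =>
        poch r (mn.1 + mn.2) / ((Nat.factorial mn.1 : ℂ) * (Nat.factorial mn.2 : ℂ)) * x ^ mn.1 * y ^ mn.2)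
      ((1 - x - y) ^ (-r)) := by
  refine hasSum_of_summable_norm_sum_antidiagonal ?_ ?_
  · have hfibre (k : ℕ) : ∑ p ∈ antidiagonal k,
        ‖poch r (p.1 + p.2) / ((p.1 ! : ℂ) * p.2 !) * x ^ p.1 * y ^ p.2‖ =
          ‖poch r k‖ / k ! * (‖x‖ + ‖y‖) ^ k := by
      rw [← sum_antidiagonal_div_factorial_mul_pow]
      refine sum_congr rfl fun p hp ↦ ?_
      rw [HasAntidiagonal.mem_antidiagonal.1 hp]
      simp [norm_pow]
    simpa only [hfibre] using
      summable_norm_poch_div_factorial_mul_pow r (by positivity) hxy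
  · have hfibre (k : ℕ) : ∑ p ∈ antidiagonal k,
        poch r (p.1 + p.2) / ((p.1 ! : ℂ) * p.2 !) * x ^ p.1 * y ^ p.2 =
          poch r k / k ! * (x + y) ^ k := by
      rw [← sum_antidiagonal_div_factorial_mul_pow]
      exact sum_congr rfl fun p hp ↦ by rw [HasAntidiagonal.mem_antidiagonal.1 hp]
    simpa only [hfibre, sub_sub] using
      hasSum_poch_div_factorial_mul_pow r ((norm_add_le x y).trans_lt hxy)
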